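/- arXiv:1301.6529 — 4 statements merged into one kernel-verified Lean document; each statement's English description precedes it below -/
import Mathlib

section
/- The (ℓ+1)×(ℓ+1) matrix M whose rows are m₀ = (1, S₁, S₂, ..., S_ℓ) and m_i = (0,...,0, G_i, 0,...,0) (with G_i in position i) for i = 1,...,ℓ, has rows forming a basis of the F[x]-module of all vectors (λ, ω₁,...,ω_ℓ) ∈ F[x]^{ℓ+1} with λ·S_i ≡ ω_i (mod G_i) for all i. -/
open Polynomial

noncomputable section

variable {F : Type*} [Field F]

/-- The degree of a vector of polynomials: maximum of the coordinate degrees. -/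
def vecDeg {n : ℕ} (v : Fin n → Polynomial F) : WithBot ℕ :=
  Finset.univ.sup fun j => (v j).degree

/-- The degree of a vector, as a natural number. -/
def vecDegNat {n : ℕ} (v : Fin n → Polynomial F) : ℕ :=
  Finset.univ.sup fun j => (v j).natDegree

/-- The leading position of a vector: the largest index attaining the degree. -/
def leadPos {n : ℕ} (v : Fin n → Polynomial F) : ℕ :=
  (Finset.univ.filter fun j => (v j).degree = vecDeg v).sup fun j => (j : ℕ)

/-- The value function val(v) = n * deg v + LP(v). -/
def vecVal {n : ℕ} (v : Fin n → Polynomial F) : ℕ :=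
  n * vecDegNat v + leadPos v

/-- The weight-embedding map Φ. -/
def PhiW (ν : ℕ) {n : ℕ} (w : Fin n → ℕ) (v : Fin n → Polynomial F) :
    Fin n → Polynomial F :=
  fun j => X ^ (w j) * (Polynomial.expand F ν (v j))

/-- The rows of the canonical basis matrix M. -/
def rowBasisM (ℓ : ℕ) (S G : Fin ℓ → Polynomial F) :
    Fin (ℓ+1) → Fin (ℓ+1) → Polynomial F :=
  fun i => Fin.cases (Fin.cons 1 S) (fun i' => fun j => if j = i'.succ then G i' else 0) i


section rowBasisM

variable (ℓ : ℕ) (S G : Fin ℓ → Polynomial F)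

lemma rowBasisM_sum_apply_zero (c : Fin (ℓ+1) → Polynomial F) :
    (∑ i, c i • rowBasisM ℓ S G i) 0 = c 0 := by
  simp [rowBasisM, Fin.sum_univ_succ, Finset.sum_apply, eq_comm (a := (0 : Fin (ℓ + 1)))]

lemma rowBasisM_sum_apply_succ (c : Fin (ℓ+1) → Polynomial F) (j : Fin ℓ) :
    (∑ i, c i • rowBasisM ℓ S G i) j.succ = c 0 * S j + c j.succ * G j := by
  simp [rowBasisM, Fin.sum_univ_succ, Finset.sum_apply, Fin.succ_inj, Finset.sum_ite_eq]

variable {ℓ S G}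

theorem linearIndependent_rowBasisM (hG : ∀ i, G i ≠ 0) :
    LinearIndependent (Polynomial F) (rowBasisM ℓ S G) := by
  rw [Fintype.linearIndependent_iff]
  intro c hc
  have hc0 : c 0 = 0 := (rowBasisM_sum_apply_zero ℓ S G c).symm.trans (congrFun hc 0)
  refine Fin.cases hc0 fun j => ?_
  have hcj := congrFun hc j.succ
  rw [rowBasisM_sum_apply_succ, hc0, zero_mul, zero_add, Pi.zero_apply] at hcj
  exact (mul_eq_zero.mp hcj).resolve_right (hG j)

variable (S G)

theorem span_rowBasisM :
    (Submodule.span (Polynomial F) (Set.range (rowBasisM ℓ S G)) :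
        Set (Fin (ℓ+1) → Polynomial F)) =
      {v | ∀ i : Fin ℓ, G i ∣ v 0 * S i - v i.succ} := by
  ext v
  simp only [SetLike.mem_coe, Submodule.mem_span_range_iff_exists_fun, Set.mem_ofPred_eq]
  constructor
  · rintro ⟨c, rfl⟩ i
    rw [rowBasisM_sum_apply_zero, rowBasisM_sum_apply_succ]
    exact ⟨-c i.succ, by ring⟩
  · intro h
    choose q hq using h
    -- the coefficient of row `i + 1` is minus the quotient of `v 0 * S i - v (i + 1)` by `G i`
    refine ⟨Fin.cons (v 0) fun i => -q i, funext <| Fin.cases ?_ fun j => ?_⟩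
    · rw [rowBasisM_sum_apply_zero, Fin.cons_zero]
    · rw [rowBasisM_sum_apply_succ, Fin.cons_zero, Fin.cons_succ]
      linear_combination hq j

end rowBasisM

theorem stmt1_general (ℓ : ℕ) (S G : Fin ℓ → Polynomial F) (hG : ∀ i, G i ≠ 0) :
    LinearIndependent (Polynomial F) (rowBasisM ℓ S G) ∧
      (Submodule.span (Polynomial F) (Set.range (rowBasisM ℓ S G)) :
          Set (Fin (ℓ+1) → Polynomial F)) =
        {v | ∀ i : Fin ℓ, G i ∣ v 0 * S i - v i.succ} :=
  ⟨linearIndependent_rowBasisM hG, span_rowBasisM S G⟩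

theorem stmt1 (ℓ : ℕ) (hℓ : 0 < ℓ) (S G : Fin ℓ → Polynomial F) (hG : ∀ i, G i ≠ 0) :
    LinearIndependent (Polynomial F) (rowBasisM ℓ S G) ∧
      (Submodule.span (Polynomial F) (Set.range (rowBasisM ℓ S G)) :
          Set (Fin (ℓ+1) → Polynomial F)) =
        {v | ∀ i : Fin ℓ, G i ∣ v 0 * S i - v i.succ} :=
  stmt1_general ℓ S G hG
end
end

section
/- If a full-rank square matrix V over F[x] is in weak Popov form, then its orthogonality defect is zero, i.e., the sum of the row degrees of V equals the degree of det(V). -/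
open Polynomial

noncomputable section

variable {F : Type*} [Field F]

/-!
Put `d i = deg (V i)`. Every term of the Leibniz expansion of `det V` has degree at most
`∑ d i`, and the coefficient of `x ^ (∑ d i)` in `det V` is the determinant of the matrix `L`
of coefficients `L i j = [x ^ d i] V i j`. The weak Popov condition makes `L` triangular up to
a permutation of its columns, with the nonzero entries `L i (LP (V i))` on the diagonal, so
`det L ≠ 0` and `deg (det V) = ∑ d i`.
-/

namespace Polynomial

theorem coeff_prod_sum_of_natDegree_le {R ι : Type*} [CommSemiring R] (s : Finset ι)
    (f : ι → R[X]) (d : ι → ℕ) (h : ∀ i ∈ s, (f i).natDegree ≤ d i) :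
    (∏ i ∈ s, f i).coeff (∑ i ∈ s, d i) = ∏ i ∈ s, (f i).coeff (d i) := by
  induction s using Finset.cons_induction with
  | empty => simp
  | cons a s ha ih =>
    have hs : ∀ i ∈ s, (f i).natDegree ≤ d i := fun i hi => h i (Finset.mem_cons_of_mem hi)
    rw [Finset.prod_cons, Finset.sum_cons, Finset.prod_cons,
      coeff_mul_add_eq_of_natDegree_le (h a (Finset.mem_cons_self a s))
        ((natDegree_prod_le _ _).trans (Finset.sum_le_sum hs)), ih hs]

end Polynomial

namespace Matrix

variable {m n R : Type*}

def rowCoeffMatrix [Semiring R] (V : Matrix m n R[X]) (d : m → ℕ) : Matrix m n R :=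
  of fun i j => (V i j).coeff (d i)

variable [Fintype n] [DecidableEq n] [CommRing R]

theorem natDegree_det_le_sum (V : Matrix n n R[X]) (d : n → ℕ)
    (hV : ∀ i j, (V i j).natDegree ≤ d i) : V.det.natDegree ≤ ∑ i, d i := by
  rw [det_apply]
  refine natDegree_sum_le_of_forall_le _ _ fun σ _ => (natDegree_smul_le _ _).trans ?_
  calc (∏ i, V (σ i) i).natDegree ≤ ∑ i, (V (σ i) i).natDegree := natDegree_prod_le _ _
    _ ≤ ∑ i, d (σ i) := Finset.sum_le_sum fun i _ => hV (σ i) i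
    _ = ∑ i, d i := Equiv.sum_comp σ d

theorem coeff_det_sum_eq_det_rowCoeffMatrix (V : Matrix n n R[X]) (d : n → ℕ)
    (hV : ∀ i j, (V i j).natDegree ≤ d i) :
    V.det.coeff (∑ i, d i) = (rowCoeffMatrix V d).det := by
  simp only [det_apply, finsetSum_coeff, coeff_smul]
  refine Finset.sum_congr rfl fun σ _ => congrArg _ ?_
  rw [← Equiv.sum_comp σ d, coeff_prod_sum_of_natDegree_le _ _ _ fun i _ => hV (σ i) i]
  rfl

end Matrix

theorem Matrix.det_ne_zero_of_pivot {n R : Type*} [Fintype n] [LinearOrder n] [CommRing R]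
    [IsDomain R] (L : Matrix n n R) (p : n → n) (hp : Function.Injective p)
    (hpivot : ∀ i, L i (p i) ≠ 0) (hright : ∀ i j, p i < j → L i j = 0) : L.det ≠ 0 := by
  let σ : Equiv.Perm n := Equiv.ofBijective p hp.bijective_of_finite
  have hσ (i : n) : p (σ.symm i) = i := σ.apply_symm_apply i
  have htri : (L.submatrix σ.symm id).IsLowerTriangular := fun i j hij => by
    simpa using hright (σ.symm i) j (by rwa [hσ])
  have hdet : (L.submatrix σ.symm id).det ≠ 0 := by
    rw [Matrix.det_of_isLowerTriangular _ htri]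
    exact Finset.prod_ne_zero_iff.mpr fun i _ => by simpa [hσ] using hpivot (σ.symm i)
  rw [Matrix.det_permute] at hdet
  exact right_ne_zero_of_mul hdet

section RowDegree

variable {n : ℕ} (v : Fin n → F[X])

theorem natDegree_le_vecDegNat (j : Fin n) : (v j).natDegree ≤ vecDegNat v :=
  Finset.le_sup (f := fun j => (v j).natDegree) (Finset.mem_univ j)

theorem degree_le_vecDeg (j : Fin n) : (v j).degree ≤ vecDeg v :=
  Finset.le_sup (f := fun j => (v j).degree) (Finset.mem_univ j)

variable {v}

theorem natDegree_eq_vecDegNat_of_degree_eq {j : Fin n} (h : (v j).degree = vecDeg v) :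
    (v j).natDegree = vecDegNat v :=
  le_antisymm (natDegree_le_vecDegNat v j) <| Finset.sup_le fun i _ =>
    natDegree_le_natDegree ((degree_le_vecDeg v i).trans h.ge)

theorem ne_zero_of_degree_eq_vecDeg (hv : v ≠ 0) {j : Fin n} (h : (v j).degree = vecDeg v) :
    v j ≠ 0 := by
  obtain ⟨k, hk⟩ := Function.ne_iff.mp hv
  intro hj
  rw [hj, degree_zero] at h
  exact hk (degree_eq_bot.mp (le_bot_iff.mp (h ▸ degree_le_vecDeg v k)))

theorem exists_leadPos_eq [NeZero n] :
    ∃ j : Fin n, leadPos v = j ∧ (v j).degree = vecDeg v := by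
  obtain ⟨j, -, hj⟩ := Finset.exists_mem_eq_sup Finset.univ Finset.univ_nonempty
    fun j => (v j).degree
  obtain ⟨k, hk, hlead⟩ := Finset.exists_mem_eq_sup
    (Finset.univ.filter fun j => (v j).degree = vecDeg v)
    ⟨j, Finset.mem_filter.mpr ⟨Finset.mem_univ j, hj.symm⟩⟩ fun j : Fin n => (j : ℕ)
  exact ⟨k, hlead, (Finset.mem_filter.mp hk).2⟩

theorem vecDeg_eq_vecDegNat (hv : v ≠ 0) : vecDeg v = vecDegNat v := by
  have : NeZero n := ⟨by rintro rfl; exact hv (Subsingleton.elim _ _)⟩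
  obtain ⟨j, -, hj⟩ := exists_leadPos_eq (v := v)
  rw [← hj, degree_eq_natDegree (ne_zero_of_degree_eq_vecDeg hv hj),
    natDegree_eq_vecDegNat_of_degree_eq hj]

theorem exists_leadPos_eq_coeff_ne_zero (hv : v ≠ 0) :
    ∃ j : Fin n, leadPos v = j ∧ (v j).coeff (vecDegNat v) ≠ 0 := by
  have : NeZero n := ⟨by rintro rfl; exact hv (Subsingleton.elim _ _)⟩
  obtain ⟨j, hlead, hj⟩ := exists_leadPos_eq (v := v)
  refine ⟨j, hlead, ?_⟩
  rw [← natDegree_eq_vecDegNat_of_degree_eq hj]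
  exact leadingCoeff_ne_zero.mpr (ne_zero_of_degree_eq_vecDeg hv hj)

theorem coeff_vecDegNat_eq_zero_of_leadPos_lt (hv : v ≠ 0) {j : Fin n} (hj : leadPos v < j) :
    (v j).coeff (vecDegNat v) = 0 := by
  have hne : (v j).degree ≠ vecDeg v := fun h => hj.not_ge <|
    Finset.le_sup (f := fun j : Fin n => (j : ℕ)) (Finset.mem_filter.mpr ⟨Finset.mem_univ j, h⟩)
  refine coeff_eq_zero_of_degree_lt ?_
  rw [← vecDeg_eq_vecDegNat hv]
  exact (degree_le_vecDeg v j).lt_of_ne hne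

end RowDegree

theorem stmt3 (n : ℕ) (V : Matrix (Fin n) (Fin n) (Polynomial F)) (hV : V.det ≠ 0)
    (hwp : Function.Injective fun i => leadPos (V i)) :
    ∑ i, vecDegNat (V i) = V.det.natDegree := by
  have hrow (i : Fin n) : V i ≠ 0 := fun h =>
    hV (Matrix.det_eq_zero_of_row_eq_zero i fun j => congrFun h j)
  choose p hp hpivot using fun i => exists_leadPos_eq_coeff_ne_zero (hrow i)
  have hdeg (i j : Fin n) : (V i j).natDegree ≤ vecDegNat (V i) := natDegree_le_vecDegNat _ j
  have hL : (Matrix.rowCoeffMatrix V fun i => vecDegNat (V i)).det ≠ 0 :=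
    Matrix.det_ne_zero_of_pivot _ p (fun a b h => hwp (by simp only [hp, h])) hpivot
      fun i j hij => coeff_vecDegNat_eq_zero_of_leadPos_lt (hrow i) (by rw [hp]; exact hij)
  refine le_antisymm ?_ (Matrix.natDegree_det_le_sum V _ hdeg)
  exact le_natDegree_of_ne_zero (by rwa [Matrix.coeff_det_sum_eq_det_rowCoeffMatrix V _ hdeg])
end
end

section
/- Let V be a square matrix over F[x] in weak Popov form whose rows form a basis of a module V̂. Then any nonzero vector b ∈ V̂ satisfies deg v ≤ deg b, where v is the unique row of V with LP(v) = LP(b). -/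
open Polynomial

noncomputable section

variable {F : Type*} [Field F]

/-!
Write `b = ∑ uᵢ Vᵢ`. Among the nonzero terms `uᵢ Vᵢ`, whose leading positions are those of the
rows `Vᵢ` and hence pairwise distinct, take the one of largest degree `D` and, among those, of
largest leading position `p`. At coordinate `p` this term has degree `D` while all others have
smaller degree, and beyond `p` every term has degree `< D`; so `b` has degree `D` and leading
position `p`, and the row `Vᵢ` of that term has degree at most `deg uᵢ + deg Vᵢ = D`.
-/

namespace PolyVec

variable {n : ℕ}

theorem degree_le_vecDeg (v : Fin n → F[X]) (j : Fin n) : (v j).degree ≤ vecDeg v :=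
  Finset.le_sup (f := fun j => (v j).degree) (Finset.mem_univ j)

theorem vecDeg_ne_bot {v : Fin n → F[X]} (hv : v ≠ 0) : vecDeg v ≠ ⊥ := by
  obtain ⟨j, hj⟩ := Function.ne_iff.mp hv
  exact ne_bot_of_le_ne_bot (degree_ne_bot.2 hj) (degree_le_vecDeg v j)

theorem le_leadPos_of_degree_eq {v : Fin n → F[X]} {j : Fin n}
    (h : (v j).degree = vecDeg v) : (j : ℕ) ≤ leadPos v :=
  Finset.le_sup (f := fun j : Fin n => (j : ℕ)) (Finset.mem_filter.2 ⟨Finset.mem_univ _, h⟩)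

theorem degree_lt_vecDeg_of_leadPos_lt {v : Fin n → F[X]} {j : Fin n}
    (h : leadPos v < (j : ℕ)) : (v j).degree < vecDeg v :=
  (degree_le_vecDeg v j).lt_of_ne fun he => (le_leadPos_of_degree_eq he).not_gt h

theorem exists_degree_eq_vecDeg_leadPos {v : Fin n → F[X]} (hv : v ≠ 0) :
    ∃ p : Fin n, (v p).degree = vecDeg v ∧ (p : ℕ) = leadPos v := by
  have hne : (Finset.univ.filter fun j => (v j).degree = vecDeg v).Nonempty := by
    obtain ⟨j, -, hj⟩ := Finset.exists_mem_eq_sup Finset.univ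
      ⟨⟨0, Fin.pos_iff_nonempty.2 (Function.ne_iff.mp hv).nonempty⟩, Finset.mem_univ _⟩
      fun j => (v j).degree
    exact ⟨j, Finset.mem_filter.2 ⟨Finset.mem_univ _, hj.symm⟩⟩
  obtain ⟨p, hp, hpmax⟩ := Finset.exists_mem_eq_sup _ hne fun j : Fin n => (j : ℕ)
  exact ⟨p, (Finset.mem_filter.1 hp).2, hpmax.symm⟩

theorem vecDeg_eq_and_leadPos_eq {v : Fin n → F[X]} {p : Fin n} {d : WithBot ℕ}
    (hp : (v p).degree = d) (hle : ∀ j, (v j).degree ≤ d)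
    (hlt : ∀ j, p < j → (v j).degree < d) : vecDeg v = d ∧ leadPos v = p := by
  have hdeg : vecDeg v = d :=
    le_antisymm (Finset.sup_le fun j _ => hle j) (hp ▸ degree_le_vecDeg v p)
  refine ⟨hdeg, le_antisymm (Finset.sup_le fun j hj => ?_) ?_⟩
  · have hj : (v j).degree = d := hdeg ▸ (Finset.mem_filter.1 hj).2
    exact le_of_not_gt fun hpj => (hlt j (Fin.lt_def.2 hpj)).ne hj
  · exact le_leadPos_of_degree_eq (hp.trans hdeg.symm)

theorem vecDeg_smul_eq_and_leadPos_smul_eq {u : F[X]} {v : Fin n → F[X]} (hu : u ≠ 0)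
    (hv : v ≠ 0) : vecDeg (u • v) = u.degree + vecDeg v ∧ leadPos (u • v) = leadPos v := by
  obtain ⟨p, hpdeg, hp⟩ := exists_degree_eq_vecDeg_leadPos hv
  rw [← hp]
  refine vecDeg_eq_and_leadPos_eq (by simp [degree_mul, hpdeg]) (fun j => ?_) (fun j hj => ?_)
  · rw [Pi.smul_apply, smul_eq_mul, degree_mul]
    gcongr
    exact degree_le_vecDeg v j
  · rw [Pi.smul_apply, smul_eq_mul, degree_mul]
    exact WithBot.add_lt_add_left (degree_ne_bot.2 hu)
      (degree_lt_vecDeg_of_leadPos_lt (hp ▸ Fin.lt_def.1 hj))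

theorem degree_sum_lt {R ι : Type*} [Semiring R] {s : Finset ι} {f : ι → R[X]}
    {d : WithBot ℕ} (hd : ⊥ < d) (h : ∀ i ∈ s, (f i).degree < d) : (∑ i ∈ s, f i).degree < d :=
  (degree_sum_le s f).trans_lt ((Finset.sup_lt_iff hd).2 h)

theorem exists_vecDeg_sum_eq_and_leadPos_sum_eq {ι : Type*} {s : Finset ι}
    {w : ι → Fin n → F[X]} (hs : s.Nonempty) (hw : ∀ i ∈ s, w i ≠ 0)
    (hinj : Set.InjOn (fun i => leadPos (w i)) s) :
    ∃ i ∈ s, vecDeg (∑ k ∈ s, w k) = vecDeg (w i) ∧ leadPos (∑ k ∈ s, w k) = leadPos (w i) := by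
  classical
  set D := s.sup fun i => vecDeg (w i)
  obtain ⟨i₁, hi₁s, hi₁⟩ := Finset.exists_mem_eq_sup s hs fun i => vecDeg (w i)
  set T := s.filter fun i => vecDeg (w i) = D
  obtain ⟨i₀, hi₀T, hi₀⟩ := Finset.exists_mem_eq_sup T
    ⟨i₁, Finset.mem_filter.2 ⟨hi₁s, hi₁.symm⟩⟩ fun i => leadPos (w i)
  obtain ⟨hi₀s, hi₀D⟩ := Finset.mem_filter.1 hi₀T
  obtain ⟨p, hpdeg, hp⟩ := exists_degree_eq_vecDeg_leadPos (hw i₀ hi₀s)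
  have hD : ⊥ < D := hi₀D ▸ bot_lt_iff_ne_bot.2 (vecDeg_ne_bot (hw i₀ hi₀s))
  have hle : ∀ i ∈ s, ∀ j, (w i j).degree ≤ D := fun i hi j =>
    (degree_le_vecDeg _ j).trans (Finset.le_sup (f := fun i => vecDeg (w i)) hi)
  have hother : ∀ i ∈ s, i ≠ i₀ → ∀ j : Fin n, p ≤ j → (w i j).degree < D := by
    intro i hi hii₀ j hpj
    refine (hle i hi j).lt_of_ne fun hj => ?_
    have hiD : vecDeg (w i) = D :=
      le_antisymm (Finset.le_sup (f := fun i => vecDeg (w i)) hi) (hj ▸ degree_le_vecDeg _ j)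
    have hiT : i ∈ T := Finset.mem_filter.2 ⟨hi, hiD⟩
    have hlt : leadPos (w i) < leadPos (w i₀) :=
      (hi₀ ▸ Finset.le_sup (f := fun i => leadPos (w i)) hiT).lt_of_ne
        fun h => hii₀ (hinj hi hi₀s h)
    exact (degree_lt_vecDeg_of_leadPos_lt (hlt.trans_le (hp ▸ Fin.le_def.1 hpj))).ne
      (hj.trans hiD.symm)
  have hsum (j : Fin n) : (∑ k ∈ s, w k) j = ∑ k ∈ s, w k j := Finset.sum_apply j s w
  refine ⟨i₀, hi₀s, ?_⟩
  rw [hi₀D, ← hp]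
  refine vecDeg_eq_and_leadPos_eq ?_ (fun j => ?_) (fun j hpj => ?_)
  · have hrest : (∑ k ∈ s.erase i₀, w k p).degree < (w i₀ p).degree := by
      rw [hpdeg, hi₀D]
      exact degree_sum_lt hD fun i hi =>
        hother i (Finset.mem_of_mem_erase hi) (Finset.ne_of_mem_erase hi) p le_rfl
    rw [hsum, ← Finset.add_sum_erase s _ hi₀s, degree_add_eq_left_of_degree_lt hrest, hpdeg, hi₀D]
  · rw [hsum]
    exact (degree_sum_le _ _).trans (Finset.sup_le fun i hi => hle i hi j)
  · rw [hsum]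
    refine degree_sum_lt hD fun i hi => ?_
    by_cases hii₀ : i = i₀
    · subst hii₀
      exact hi₀D ▸ degree_lt_vecDeg_of_leadPos_lt (hp ▸ Fin.lt_def.1 hpj)
    · exact hother i hi hii₀ j hpj.le

end PolyVec

open PolyVec in
theorem stmt5_general (n : ℕ) (V : Matrix (Fin n) (Fin n) (Polynomial F))
    (hwp : Function.Injective fun i => leadPos (V i))
    (b : Fin n → Polynomial F)
    (hb : b ∈ Submodule.span (Polynomial F) (Set.range fun i => V i)) (hb0 : b ≠ 0) :
    ∃ i, leadPos (V i) = leadPos b ∧ vecDeg (V i) ≤ vecDeg b := by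
  classical
  obtain ⟨u, rfl⟩ := Submodule.mem_span_range_iff_exists_fun _ |>.1 hb
  set s := Finset.univ.filter fun i => u i • V i ≠ 0
  have hsum : ∑ i ∈ s, u i • V i = ∑ i, u i • V i := Finset.sum_filter_ne_zero _
  have hnz : ∀ i ∈ s, u i ≠ 0 ∧ V i ≠ 0 := fun i hi =>
    smul_ne_zero_iff.1 (Finset.mem_filter.1 hi).2
  have hsmul : ∀ i ∈ s, vecDeg (u i • V i) = (u i).degree + vecDeg (V i) ∧
      leadPos (u i • V i) = leadPos (V i) := fun i hi =>
    vecDeg_smul_eq_and_leadPos_smul_eq (hnz i hi).1 (hnz i hi).2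
  have hs : s.Nonempty := Finset.nonempty_of_sum_ne_zero (hsum ▸ hb0)
  obtain ⟨i, hi, hdeg, hlead⟩ := exists_vecDeg_sum_eq_and_leadPos_sum_eq hs
    (fun i hi => (Finset.mem_filter.1 hi).2)
    fun i hi k hk h => hwp ((hsmul i hi).2.symm.trans (h.trans (hsmul k hk).2))
  refine ⟨i, by rw [← hsum, hlead, (hsmul i hi).2], ?_⟩
  rw [← hsum, hdeg, (hsmul i hi).1]
  exact le_add_of_nonneg_left (zero_le_degree_iff.2 (hnz i hi).1)

theorem stmt5 (n : ℕ) (V : Matrix (Fin n) (Fin n) (Polynomial F)) (hV : V.det ≠ 0)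
    (hwp : Function.Injective fun i => leadPos (V i))
    (b : Fin n → Polynomial F)
    (hb : b ∈ Submodule.span (Polynomial F) (Set.range fun i => V i)) (hb0 : b ≠ 0) :
    ∃ i, leadPos (V i) = leadPos b ∧ vecDeg (V i) ≤ vecDeg b :=
  stmt5_general n V hwp b hb hb0
end
end

section
/- Gao key equation, powered: Let α₀,...,α_{n−1} ∈ F be distinct, c_j = f(α_j) for a polynomial f, r_j = c_j + e_j, Λ(x) = ∏_{j : e_j ≠ 0}(x − α_j), G(x) = ∏_{j=0}^{n−1}(x − α_j), and R ∈ F[x] the polynomial with R(α_j) = r_j for all j. Then for every i ≥ 1: Λ(x)·R(x)^i ≡ Λ(x)·f(x)^i (mod G(x)). -/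
open Polynomial

noncomputable section

variable {F : Type*} [Field F]

/-! At each `α j`, either `e j ≠ 0` and `α j` is a root of the error locator `Λ`, or `R` and `f`
agree there; so `Λ * (R - f)` vanishes on all the `α j` and is divisible by `G`. Since
`R - f ∣ R ^ i - f ^ i`, the powered congruence follows. -/

namespace Polynomial

theorem prod_X_sub_C_dvd_of_forall_eval_eq_zero {ι : Type*} [Fintype ι] {α : ι → F}
    (hα : Function.Injective α) {p : F[X]} (hp : ∀ j, p.eval (α j) = 0) :
    ∏ j, (X - C (α j)) ∣ p :=
  Fintype.prod_dvd_of_coprime (pairwise_coprime_X_sub_C hα) fun j => dvd_iff_isRoot.mpr (hp j)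

theorem eval_errorLocator_mul_sub_eq_zero [DecidableEq F] {ι : Type*} [Fintype ι]
    (α : ι → F) (e : ι → F) {R f : F[X]} (hR : ∀ j, R.eval (α j) = f.eval (α j) + e j) (j : ι) :
    ((∏ k ∈ Finset.univ.filter (fun k => e k ≠ 0), (X - C (α k))) * (R - f)).eval (α j) = 0 := by
  by_cases he : e j = 0
  · simp [hR j, he]
  · rw [eval_mul, eval_prod, Finset.prod_eq_zero (i := j) (by simp [he]) (by simp), zero_mul]

theorem prod_X_sub_C_dvd_errorLocator_mul_sub [DecidableEq F] {ι : Type*} [Fintype ι]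
    {α : ι → F} (hα : Function.Injective α) (e : ι → F) {R f : F[X]}
    (hR : ∀ j, R.eval (α j) = f.eval (α j) + e j) :
    ∏ j, (X - C (α j)) ∣ (∏ k ∈ Finset.univ.filter (fun k => e k ≠ 0), (X - C (α k))) * (R - f) :=
  prod_X_sub_C_dvd_of_forall_eval_eq_zero hα (eval_errorLocator_mul_sub_eq_zero α e hR)

end Polynomial

theorem stmt16_general [DecidableEq F] (n : ℕ) (α : Fin n → F)
    (hα : Function.Injective α) (f : Polynomial F) (e : Fin n → F)
    (R : Polynomial F) (hR : ∀ j, R.eval (α j) = f.eval (α j) + e j)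
    (Λ G : Polynomial F)
    (hΛ : Λ = ∏ j ∈ Finset.univ.filter (fun j => e j ≠ 0), (X - C (α j)))
    (hG : G = ∏ j : Fin n, (X - C (α j))) :
    ∀ i : ℕ, 1 ≤ i → G ∣ Λ * R ^ i - Λ * f ^ i := by
  intro i _
  have key : G ∣ Λ * (R - f) := hG ▸ hΛ ▸ prod_X_sub_C_dvd_errorLocator_mul_sub hα e hR
  rw [← mul_sub]
  exact key.trans (mul_dvd_mul_left Λ (sub_dvd_pow_sub_pow R f i))

theorem stmt16 [DecidableEq F] (n : ℕ) (hn : 0 < n) (α : Fin n → F)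
    (hα : Function.Injective α) (f : Polynomial F) (e : Fin n → F)
    (R : Polynomial F) (hR : ∀ j, R.eval (α j) = f.eval (α j) + e j)
    (Λ G : Polynomial F)
    (hΛ : Λ = ∏ j ∈ Finset.univ.filter (fun j => e j ≠ 0), (X - C (α j)))
    (hG : G = ∏ j : Fin n, (X - C (α j))) :
    ∀ i : ℕ, 1 ≤ i → G ∣ Λ * R ^ i - Λ * f ^ i :=
  stmt16_general n α hα f e R hR Λ G hΛ hG
end
end
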